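/- For the additive channel Y = X₁ ⊕ … ⊕ X_c ⊕ N over F_q with N independent of the inputs, when all messages M₁, …, M_c are independent and uniform on F_q^k and each sender transmits its message encoded by the same linear code, the receiver's observation is independent of (M₁, …, M_{c-1}) given the modulo sum M₁ + … + M_c. -/

import Mathlib

open scoped BigOperators

/-- Shannon entropy of a pmf on a finite type (natural log). -/
noncomputable def ent {α : Type*} [Fintype α] (p : α → ℝ) : ℝ :=
  -∑ a, p a * Real.log (p a)

/-- Conditional mutual information `I(X;Y|Z)` of a joint pmf on `α × β × γ`. -/
noncomputable def condMI {α β γ : Type*} [Fintype α] [Fintype β] [Fintype γ]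
    (p : α × β × γ → ℝ) : ℝ :=
  ent (fun ac : α × γ => ∑ b, p (ac.1, b, ac.2))
  + ent (fun bc : β × γ => ∑ a, p (a, bc.1, bc.2))
  - ent (fun c : γ => ∑ a, ∑ b, p (a, b, c))
  - ent p

/-!
The joint law `q⁻ᶜ ν(y - G s)` of `(Y, (M₁, …, M_{c-1}), ∑ᵢ Mᵢ)` does not involve the first
`c - 1` messages: given the sum they are uniform and independent of `Y`, since `Y` sees the
messages only through `∑ᵢ G Mᵢ = G (∑ᵢ Mᵢ)`. For any pmf of the form `f(a, c) g(b | c)` the chain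
rule `H(B, D) = H(D) + ∑_d p(d) H(B | D = d)` makes the four entropies in `I(A; B | C)` cancel.
-/

open Real

lemma ent_eq_sum_negMulLog {α : Type*} [Fintype α] (p : α → ℝ) :
    ent p = ∑ a, negMulLog (p a) := by
  simp only [ent, negMulLog, neg_mul, Finset.sum_neg_distrib]

lemma ent_comp_equiv {α β : Type*} [Fintype α] [Fintype β] (e : α ≃ β) (p : β → ℝ) :
    ent (p ∘ e) = ent p := by
  simp only [ent_eq_sum_negMulLog]
  exact e.sum_comp fun b => negMulLog (p b)

/-- Chain rule for a joint pmf `p(b, d) = F(d) g(b | d)`. -/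
lemma ent_mul_kernel {β δ : Type*} [Fintype β] [Fintype δ] (F : δ → ℝ) (g : β → δ → ℝ)
    (hg : ∀ d, ∑ b, g b d = 1) :
    ent (fun x : β × δ => F x.2 * g x.1 x.2) = ent F + ∑ d, F d * ent (fun b => g b d) := by
  simp only [ent_eq_sum_negMulLog, negMulLog_mul, Fintype.sum_prod_type_right,
    Finset.sum_add_distrib, ← Finset.sum_mul, ← Finset.mul_sum, hg, one_mul]

theorem condMI_mul_kernel_eq_zero {α β γ : Type*} [Fintype α] [Fintype β] [Fintype γ]
    (f : α × γ → ℝ) (g : β → γ → ℝ) (hg : ∀ c, ∑ b, g b c = 1) :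
    condMI (fun x : α × β × γ => f (x.1, x.2.2) * g x.2.1 x.2.2) = 0 := by
  set F : γ → ℝ := fun c => ∑ a, f (a, c)
  have hAC : ent (fun ac : α × γ => ∑ b, f (ac.1, ac.2) * g b ac.2) = ent f := by
    simp only [← Finset.mul_sum, hg, mul_one]
  have hBC : ent (fun bc : β × γ => ∑ a, f (a, bc.2) * g bc.1 bc.2)
      = ent F + ∑ c, F c * ent (fun b => g b c) := by
    simp only [← Finset.sum_mul]
    exact ent_mul_kernel F g hg
  have hC : (fun c : γ => ∑ a, ∑ b, f (a, c) * g b c) = F := by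
    simp only [← Finset.mul_sum, hg, mul_one]
    rfl
  let e : α × β × γ ≃ β × (α × γ) :=
    { toFun := fun x => (x.2.1, x.1, x.2.2)
      invFun := fun x => (x.2.1, x.1, x.2.2)
      left_inv := fun _ => rfl
      right_inv := fun _ => rfl }
  have hABC : ent (fun x : α × β × γ => f (x.1, x.2.2) * g x.2.1 x.2.2)
      = ent f + ∑ ac, f ac * ent (fun b => g b ac.2) :=
    (ent_comp_equiv e _).trans (ent_mul_kernel f (fun b ac => g b ac.2) fun ac => hg ac.2)
  have hF : ∑ ac, f ac * ent (fun b => g b ac.2) = ∑ c, F c * ent (fun b => g b c) := by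
    simp only [Fintype.sum_prod_type_right, F, Finset.sum_mul]
  rw [condMI, hAC, hBC, hC, hABC, hF]
  ring

theorem condMI_uniform_middle_eq_zero {α β γ : Type*} [Fintype α] [Fintype β] [Fintype γ]
    [Nonempty β] (f : α × γ → ℝ) :
    condMI (fun x : α × β × γ => f (x.1, x.2.2)) = 0 := by
  have hβ : (Fintype.card β : ℝ) ≠ 0 := Nat.cast_ne_zero.mpr Fintype.card_ne_zero
  have h := condMI_mul_kernel_eq_zero (β := β) (fun ac => Fintype.card β * f ac)
    (fun _ _ => (Fintype.card β : ℝ)⁻¹) fun _ => by simp [hβ]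
  simpa only [mul_comm (Fintype.card β : ℝ), mul_inv_cancel_right₀ hβ] using h

theorem additive_channel_security_general
    {F : Type*} [Field F] [Fintype F] (k n c : ℕ)
    (G : (Fin k → F) →ₗ[F] (Fin n → F))
    (ν : (Fin n → F) → ℝ) :
    condMI (fun yvs : (Fin n → F) × (Fin (c - 1) → (Fin k → F)) × (Fin k → F) =>
        ((Fintype.card (Fin k → F) : ℝ) ^ c)⁻¹ * ν (yvs.1 - G yvs.2.2))
      = 0 :=
  condMI_uniform_middle_eq_zero fun ys => ((Fintype.card (Fin k → F) : ℝ) ^ c)⁻¹ * ν (ys.1 - G ys.2)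

/-- For the additive channel `Y = X₁ ⊕ ⋯ ⊕ X_c ⊕ N` over `F_q^n`, with all messages
`M₁,…,M_c` independent uniform on `F_q^k`, each encoded by the same injective linear code
`G`, the receiver's observation is conditionally independent of `(M₁,…,M_{c-1})` given the
modulo sum `∑ᵢ Mᵢ`: the conditional mutual information `I(Y; M₁,…,M_{c-1} | ∑ᵢ Mᵢ)` of the
induced joint distribution is `0`. -/
theorem additive_channel_security
    {F : Type*} [Field F] [Fintype F] (k n c : ℕ) (hc : 0 < c)
    (G : (Fin k → F) →ₗ[F] (Fin n → F)) (hG : Function.Injective G)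
    (ν : (Fin n → F) → ℝ) (hν0 : ∀ z, 0 ≤ ν z) (hν1 : ∑ z, ν z = 1) :
    condMI (fun yvs : (Fin n → F) × (Fin (c - 1) → (Fin k → F)) × (Fin k → F) =>
        ((Fintype.card (Fin k → F) : ℝ) ^ c)⁻¹ * ν (yvs.1 - G yvs.2.2))
      = 0 :=
  additive_channel_security_general k n c G ν
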